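/- arXiv:2109.14488 — 4 statements merged into one kernel-verified Lean document; each statement's English description precedes it below -/
import Mathlib

section
/- Let G be a digraph with excess one, i.e. a k-geodetic digraph of minimum out-degree d and order M(d,k)+1, with outlier function o assigning to each vertex u the unique vertex o(u) with d(u,o(u)) ≥ k+1. If u and v are distinct vertices with N^+(u) = N^+(v), then o(u) = v and o(v) = u. -/
/-- `IsWalk A w` means the nonempty list `w` of vertices is a directed walk
in the digraph with adjacency relation `A`. -/
def IsWalk {V : Type*} (A : V → V → Prop) : List V → Prop
  | [] => False
  | [_] => True
  | a :: b :: l => A a b ∧ IsWalk A (b :: l)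

/-- `WalkFrom A u v w` means `w` is a directed walk from `u` to `v`.
A walk represented by a list of length `n+1` has length `n` as a walk. -/
def WalkFrom {V : Type*} (A : V → V → Prop) (u v : V) (w : List V) : Prop :=
  IsWalk A w ∧ w.head? = some u ∧ w.getLast? = some v

/-- A digraph is `k`-geodetic if for any (not necessarily distinct) vertices
`u, v` there is at most one directed walk from `u` to `v` of length `≤ k`. -/
def KGeodetic {V : Type*} (A : V → V → Prop) (k : ℕ) : Prop :=
  ∀ u v : V, ∀ w₁ w₂ : List V, WalkFrom A u v w₁ → WalkFrom A u v w₂ →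
    w₁.length ≤ k + 1 → w₂.length ≤ k + 1 → w₁ = w₂

/-- `ReachIn A k u v` means there is a directed walk from `u` to `v` of
length at most `k`. -/
def ReachIn {V : Type*} (A : V → V → Prop) (k : ℕ) (u v : V) : Prop :=
  ∃ w : List V, WalkFrom A u v w ∧ w.length ≤ k + 1

/-- The directed Moore bound `M(d,k) = 1 + d + d^2 + ... + d^k`. -/
def mooreBound (d k : ℕ) : ℕ := ∑ i ∈ Finset.range (k + 1), d ^ i

/-- `o` is the outlier function of a `k`-geodetic digraph with excess one:
for each vertex `u`, `o u` is the unique vertex not reachable from `u` by a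
walk of length at most `k`. -/
def IsOutlierFn {V : Type*} (A : V → V → Prop) (k : ℕ) (o : V → V) : Prop :=
  ∀ u v : V, ¬ ReachIn A k u v ↔ v = o u

/-! A walk `u → b → ⋯ → v` of length at most `k` would turn, after replacing its first
vertex by `v` (legitimate since `b ∈ N⁺(u) = N⁺(v)`), into a closed walk at `v` of length
at most `k`, which competes with the trivial walk `[v]` in a `k`-geodetic digraph. Hence
`v` is not reachable from `u` within `k` steps, i.e. `v = o u`, and symmetrically. -/

section

variable {V : Type*} {A : V → V → Prop} {k : ℕ}

lemma KGeodetic.not_walkFrom_cycle (hgeo : KGeodetic A k) {v b : V} {l : List V}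
    (hw : WalkFrom A v v (v :: b :: l)) (hlen : l.length + 2 ≤ k + 1) : False := by
  have := hgeo v v [v] _ ⟨trivial, rfl, rfl⟩ hw (by simp) hlen
  simp at this

lemma WalkFrom.replace_head {u v x b : V} {l : List V} (hw : WalkFrom A u x (u :: b :: l))
    (hvb : A v b) : WalkFrom A v x (v :: b :: l) :=
  ⟨⟨hvb, hw.1.2⟩, rfl, hw.2.2⟩

lemma KGeodetic.not_reachIn_of_outNeighbors_eq (hgeo : KGeodetic A k) {u v : V}
    (huv : u ≠ v) (hN : {w : V | A u w} = {w : V | A v w}) : ¬ ReachIn A k u v := by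
  rintro ⟨w, hw, hlen⟩
  match w, hw with
  | [], ⟨_, hh, _⟩ => simp at hh
  | [a], ⟨_, hh, hl⟩ => exact huv (by simp_all)
  | a :: b :: l, hw =>
    obtain rfl : a = u := by simpa using hw.2.1
    have hvb : A v b := (Set.ext_iff.mp hN b).mp hw.1.1
    exact hgeo.not_walkFrom_cycle (hw.replace_head hvb) (by simpa using hlen)

end

theorem stmt_7_general {V : Type*} (A : V → V → Prop) (k : ℕ)
    (hgeo : KGeodetic A k)
    (o : V → V) (ho : IsOutlierFn A k o)
    (u v : V) (huv : u ≠ v)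
    (hN : {w : V | A u w} = {w : V | A v w}) :
    o u = v ∧ o v = u :=
  ⟨((ho u v).mp (hgeo.not_reachIn_of_outNeighbors_eq huv hN)).symm,
    ((ho v u).mp (hgeo.not_reachIn_of_outNeighbors_eq huv.symm hN.symm)).symm⟩

/-- In a `(d,k;+1)`-digraph, two distinct vertices with the same
out-neighbourhood are outliers of each other. -/
theorem stmt_7 {V : Type*} [Fintype V] (A : V → V → Prop) (d k : ℕ)
    (hd : 2 ≤ d) (hk : 2 ≤ k)
    (hgeo : KGeodetic A k)
    (hdeg : ∀ u : V, d ≤ Set.ncard {w : V | A u w})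
    (hcard : Fintype.card V = mooreBound d k + 1)
    (o : V → V) (ho : IsOutlierFn A k o)
    (u v : V) (huv : u ≠ v)
    (hN : {w : V | A u w} = {w : V | A v w}) :
    o u = v ∧ o v = u :=
  stmt_7_general A k hgeo o ho u v huv hN
end

section
/- Let G be a (d,k;+1)-digraph whose outlier function o is an automorphism, and suppose u is a vertex with an arc from o(u) to u (a Type II vertex). Then u has exactly one out-neighbour u' with an arc from o(u') to u', namely u' = o^{-1}(u). -/
theorem KGeodetic.eq_of_paths_of_length_two {V : Type*} {A : V → V → Prop} {k : ℕ}
    (hgeo : KGeodetic A k) (hk : 2 ≤ k) {a b b' c : V}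
    (hab : A a b) (hbc : A b c) (hab' : A a b') (hb'c : A b' c) : b = b' := by
  have hlen : [a, b, c].length ≤ k + 1 := by simp only [List.length_cons, List.length_nil]; omega
  have hpaths := hgeo a c [a, b, c] [a, b', c] ⟨⟨hab, hbc, trivial⟩, rfl, rfl⟩
    ⟨⟨hab', hb'c, trivial⟩, rfl, rfl⟩ hlen hlen
  simpa using hpaths

theorem adj_symm_apply_iff {V : Type*} {A : V → V → Prop} {o : V ≃ V}
    (hhom : ∀ a b : V, A a b ↔ A (o a) (o b)) (u : V) : A u (o.symm u) ↔ A (o u) u := by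
  simpa using hhom u (o.symm u)

theorem stmt_8_general {V : Type*} (A : V → V → Prop) (k : ℕ)
    (hk : 2 ≤ k)
    (hgeo : KGeodetic A k)
    (o : V ≃ V)
    (hhom : ∀ a b : V, A a b ↔ A (o a) (o b))
    (u : V) (hII : A (o u) u) :
    ∀ u' : V, (A u u' ∧ A (o u') u') ↔ u' = o.symm u := by
  intro u'
  constructor
  · rintro ⟨huu', hII'⟩
    -- `o u → u → u'` and `o u → o u' → u'` are both walks of length two.
    have hou : o u' = u :=
      hgeo.eq_of_paths_of_length_two hk ((hhom u u').mp huu') hII' hII huu'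
    exact o.eq_symm_apply.mpr hou
  · rintro rfl
    have huu' := (adj_symm_apply_iff hhom u).mpr hII
    exact ⟨huu', by simpa using huu'⟩

/-- In a `(d,k;+1)`-digraph whose outlier function `o` is an automorphism, a
Type II vertex `u` (one with an arc `o(u) → u`) has a unique Type II
out-neighbour, namely `o⁻¹(u)`. -/
theorem stmt_8 {V : Type*} [Fintype V] (A : V → V → Prop) (d k : ℕ)
    (hd : 2 ≤ d) (hk : 2 ≤ k)
    (hgeo : KGeodetic A k)
    (hdeg : ∀ u : V, d ≤ Set.ncard {w : V | A u w})
    (hcard : Fintype.card V = mooreBound d k + 1)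
    (o : V ≃ V) (ho : IsOutlierFn A k o)
    (hhom : ∀ a b : V, A a b ↔ A (o a) (o b))
    (u : V) (hII : A (o u) u) :
    ∀ u' : V, (A u u' ∧ A (o u') u') ↔ u' = o.symm u :=
  stmt_8_general A k hk hgeo o hhom u hII
end

section
/- A vertex-transitive (d,k;+1)-digraph contains no Type II vertex: if G is vertex-transitive then for no vertex u is there an arc from o(u) to u. -/
/-!
Vertex-transitivity carries the outlier function along automorphisms, so if one vertex is
Type II then all are. If `u` and its out-neighbour `w` are both Type II, then
`o u → u → w` and `o u → o w → w` are walks of length `2 ≤ k` with the same ends, so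
`u = o w` by `k`-geodecity. Hence `u` has at most one out-neighbour, contradicting `d ≥ 2`.
-/

def IsTypeII {V : Type*} (A : V → V → Prop) (o : V → V) (u : V) : Prop :=
  A (o u) u

section

variable {V : Type*} {A : V → V → Prop} {k : ℕ}

lemma IsWalk.map {B : V → V → Prop} (φ : V → V) (hφ : ∀ a b, A a b → B (φ a) (φ b)) :
    ∀ {w : List V}, IsWalk A w → IsWalk B (w.map φ)
  | [], h => h.elim
  | [_], _ => trivial
  | _ :: _ :: _, h => ⟨hφ _ _ h.1, IsWalk.map φ hφ h.2⟩

lemma ReachIn.map (φ : V → V) (hφ : ∀ a b, A a b → A (φ a) (φ b)) {u v : V}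
    (h : ReachIn A k u v) : ReachIn A k (φ u) (φ v) := by
  obtain ⟨w, ⟨hw, hhead, hlast⟩, hlen⟩ := h
  refine ⟨w.map φ, ⟨hw.map φ hφ, ?_, ?_⟩, by simpa using hlen⟩
  · rw [List.head?_map, hhead]; rfl
  · rw [List.getLast?_map, hlast]; rfl

lemma IsOutlierFn.apply_comm {o : V → V} (ho : IsOutlierFn A k o) {φ : V ≃ V}
    (hφ : ∀ a b, A a b ↔ A (φ a) (φ b)) (u : V) : φ (o u) = o (φ u) := by
  refine (ho (φ u) (φ (o u))).mp fun h => (ho u (o u)).mpr rfl ?_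
  simpa using h.map φ.symm fun a b hab => (hφ _ _).mpr (by simpa using hab)

lemma IsTypeII.of_automorphism {o : V → V} (ho : IsOutlierFn A k o) {φ : V ≃ V}
    (hφ : ∀ a b, A a b ↔ A (φ a) (φ b)) {u : V} (hu : IsTypeII A o u) :
    IsTypeII A o (φ u) := by
  unfold IsTypeII
  rw [← ho.apply_comm hφ]
  exact (hφ _ _).mp hu

lemma KGeodetic.eq_of_adj_adj (hgeo : KGeodetic A k) (hk : 2 ≤ k) {x y y' z : V}
    (hxy : A x y) (hyz : A y z) (hxy' : A x y') (hy'z : A y' z) : y = y' := by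
  have hwalk : ∀ {m}, A x m → A m z → WalkFrom A x z [x, m, z] :=
    fun hxm hmz => ⟨⟨hxm, hmz, trivial⟩, rfl, rfl⟩
  have := hgeo x z _ _ (hwalk hxy hyz) (hwalk hxy' hy'z) (by simp; omega) (by simp; omega)
  simpa using this

lemma IsTypeII.eq_of_adj (hgeo : KGeodetic A k) (hk : 2 ≤ k) {o : V → V}
    (hhom : ∀ a b, A a b → A (o a) (o b)) {u w : V} (hu : IsTypeII A o u) (huw : A u w)
    (hw : IsTypeII A o w) : u = o w :=
  hgeo.eq_of_adj_adj hk hu huw (hhom u w huw) hw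

lemma IsTypeII.subsingleton_adj_isTypeII (hgeo : KGeodetic A k) (hk : 2 ≤ k) {o : V → V}
    (ho : Function.Injective o) (hhom : ∀ a b, A a b → A (o a) (o b)) {u : V}
    (hu : IsTypeII A o u) : {w | A u w ∧ IsTypeII A o w}.Subsingleton :=
  fun _ ⟨huw₁, hw₁⟩ _ ⟨huw₂, hw₂⟩ =>
    ho ((hu.eq_of_adj hgeo hk hhom huw₁ hw₁).symm.trans (hu.eq_of_adj hgeo hk hhom huw₂ hw₂))

end

theorem stmt_9_general {V : Type*} (A : V → V → Prop) (d k : ℕ)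
    (hd : 2 ≤ d) (hk : 2 ≤ k)
    (hgeo : KGeodetic A k)
    (hdeg : ∀ u : V, d ≤ Set.ncard {w : V | A u w})
    (o : V ≃ V) (ho : IsOutlierFn A k o)
    (hhom : ∀ a b : V, A a b ↔ A (o a) (o b))
    (hvt : ∀ u v : V, ∃ φ : V ≃ V, (∀ a b : V, A a b ↔ A (φ a) (φ b)) ∧ φ u = v) :
    ∀ u : V, ¬ A (o u) u := by
  intro u hu
  have hall : ∀ v, IsTypeII A o v := fun v => by
    obtain ⟨φ, hφ, rfl⟩ := hvt u v
    exact IsTypeII.of_automorphism ho hφ hu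
  have hsub : {w | A u w}.Subsingleton := by
    simpa [hall] using
      (hall u).subsingleton_adj_isTypeII hgeo hk o.injective fun a b => (hhom a b).mp
  have : Finite {w | A u w} := hsub.finite.to_subtype
  have := (Set.ncard_le_one_iff_subsingleton.mpr hsub).trans' (hdeg u)
  omega

/-- A vertex-transitive `(d,k;+1)`-digraph contains no Type II vertex: for no
vertex `u` is there an arc from `o(u)` to `u`. -/
theorem stmt_9 {V : Type*} [Fintype V] (A : V → V → Prop) (d k : ℕ)
    (hd : 2 ≤ d) (hk : 2 ≤ k)
    (hgeo : KGeodetic A k)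
    (hdeg : ∀ u : V, d ≤ Set.ncard {w : V | A u w})
    (hcard : Fintype.card V = mooreBound d k + 1)
    (o : V ≃ V) (ho : IsOutlierFn A k o)
    (hhom : ∀ a b : V, A a b ↔ A (o a) (o b))
    (hvt : ∀ u v : V, ∃ φ : V ≃ V, (∀ a b : V, A a b ↔ A (φ a) (φ b)) ∧ φ u = v) :
    ∀ u : V, ¬ A (o u) u :=
  stmt_9_general A d k hd hk hgeo hdeg o ho hhom hvt
end

section
/- If G is a vertex-transitive (d,k;+1)-digraph, then for 2 ≤ t ≤ k-1, (k+t) divides (M(d,k)+1)·(d^t − d^{t-1}). -/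
/-!
In a `k`-geodetic digraph a walk of length at most `k` is determined by its endpoints.
Every automorphism commutes with the outlier map `o`; together with vertex-transitivity and
`d ≥ 2` this rules out walks of length `1, …, k-1` from `u` to `o⁻¹ u`. So for `1 ≤ t < k`
every endpoint `v` of a `t`-walk from `u` returns to `u` within `k` steps, and cutting a based
`(k+t)`-cycle at `u` and at position `t` identifies the based cycles at `u` with the endpoints
that return in exactly `k` steps. These are `d^t − d^(t-1)` in number: of the `d^t` endpoints,
those returning sooner are exactly one out-neighbour of each endpoint of a `(t-1)`-walk.
Rotation acts freely on based cycles of length `k + t ≤ 2k + 1`, so `k + t` divides their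
number `|V| (d^t − d^(t-1))`.
-/

section

variable {V : Type*} {A : V → V → Prop} {n : ℕ}

/-- Walks are encoded as sequences (of which only `f 0, …, f n` matter), so that they can be
cut and glued by index. -/
def IsWalkFn (A : V → V → Prop) (f : ℕ → V) (n : ℕ) (u v : V) : Prop :=
  f 0 = u ∧ f n = v ∧ ∀ i < n, A (f i) (f (i + 1))

def HasWalk (A : V → V → Prop) (n : ℕ) (u v : V) : Prop :=
  ∃ f, IsWalkFn A f n u v

theorem isWalk_iff_isChain {l : List V} : IsWalk A l ↔ l ≠ [] ∧ l.IsChain A := by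
  induction l with
  | nil => simp [IsWalk]
  | cons a l ih =>
    cases l with
    | nil => simp [IsWalk]
    | cons b l => simp [IsWalk, ih]

namespace IsWalkFn

variable {f g : ℕ → V} {m : ℕ} {u v w : V}

theorem walkFrom (hf : IsWalkFn A f n u v) : WalkFrom A u v ((List.range (n + 1)).map f) := by
  obtain ⟨hu, hv, hadj⟩ := hf
  refine ⟨isWalk_iff_isChain.2 ⟨by simp, ?_⟩, by simp [List.range_succ_eq_map, hu],
    by simp [List.getLast?_range, hv]⟩
  rw [List.isChain_map, List.isChain_range_succ]
  exact hadj

theorem take (hf : IsWalkFn A f n u v) (hm : m ≤ n) : IsWalkFn A f m u (f m) :=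
  ⟨hf.1, rfl, fun i hi => hf.2.2 i (by omega)⟩

theorem drop (hf : IsWalkFn A f n u v) (hm : m ≤ n) :
    IsWalkFn A (fun i => f (m + i)) (n - m) (f m) v :=
  ⟨rfl, by simpa [Nat.add_sub_cancel' hm] using hf.2.1,
    fun i hi => by simpa [Nat.add_assoc] using hf.2.2 (m + i) (by omega)⟩

theorem append (hf : IsWalkFn A f m u v) (hg : IsWalkFn A g n v w) :
    IsWalkFn A (fun i => if i ≤ m then f i else g (i - m)) (m + n) u w := by
  refine ⟨by simp [hf.1], ?_, fun i hi => ?_⟩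
  · rcases n.eq_zero_or_pos with rfl | hn
    · simp [hf.2.1, ← hg.1, hg.2.1]
    · simp [show ¬ m + n ≤ m by omega, hg.2.1]
  · rcases lt_trichotomy i m with h | rfl | h
    · simpa [h.le, show i + 1 ≤ m by omega] using hf.2.2 i h
    · simpa [hf.2.1, hg.1] using hg.2.2 0 (by omega)
    · simpa [show ¬ i ≤ m by omega, show ¬ i + 1 ≤ m by omega,
        show i + 1 - m = i - m + 1 by omega] using hg.2.2 (i - m) (by omega)

theorem edge (h : A u v) : IsWalkFn A (fun i => if i = 0 then u else v) 1 u v :=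
  ⟨rfl, rfl, fun i hi => by simpa [show i = 0 by omega] using h⟩

theorem map {φ : V → V} (hφ : ∀ a b, A a b → A (φ a) (φ b)) (hf : IsWalkFn A f n u v) :
    IsWalkFn A (φ ∘ f) n (φ u) (φ v) :=
  ⟨by simp [hf.1], by simp [hf.2.1], fun i hi => hφ _ _ (hf.2.2 i hi)⟩

end IsWalkFn

theorem reachIn_iff {k : ℕ} {u v : V} : ReachIn A k u v ↔ ∃ n ≤ k, HasWalk A n u v := by
  constructor
  · rintro ⟨l, ⟨hl, hu, hv⟩, hlen⟩
    have hchain := (isWalk_iff_isChain.1 hl).2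
    refine ⟨l.length - 1, by omega, fun i => l.getD i u, ?_, ?_, fun i hi => ?_⟩
    · simp only [List.getD_eq_getElem?_getD, ← List.head?_eq_getElem?, hu, Option.getD_some]
    · simp only [List.getD_eq_getElem?_getD, ← List.getLast?_eq_getElem?, hv, Option.getD_some]
    · have := List.isChain_iff_getElem.1 hchain i (by omega)
      simpa [List.getD_eq_getElem?_getD, List.getElem?_eq_getElem (by omega : i < l.length),
        List.getElem?_eq_getElem (by omega : i + 1 < l.length)] using this
  · rintro ⟨n, hn, f, hf⟩
    exact ⟨_, hf.walkFrom, by simpa using hn⟩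

namespace KGeodetic

variable {k m : ℕ} {f g : ℕ → V} {u v : V}

theorem eq_of_isWalkFn (hgeo : KGeodetic A k) (hf : IsWalkFn A f m u v)
    (hg : IsWalkFn A g n u v) (hm : m ≤ k) (hn : n ≤ k) : m = n ∧ ∀ i ≤ m, f i = g i := by
  have h := hgeo u v _ _ hf.walkFrom hg.walkFrom (by simpa using hm) (by simpa using hn)
  have hmn : m = n := by simpa using congrArg List.length h
  subst hmn
  exact ⟨rfl, fun i hi => List.map_inj_left.1 h i (by simp; omega)⟩

theorem not_isWalkFn_self (hgeo : KGeodetic A k) (hf : IsWalkFn A f n u u) (hn : 0 < n)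
    (hnk : n ≤ k) : False := by
  have := (hgeo.eq_of_isWalkFn hf (g := fun _ => u) ⟨rfl, rfl, by omega⟩ hnk (Nat.zero_le k)).1
  omega

end KGeodetic

def IsAutomorphism (A : V → V → Prop) (φ : V ≃ V) : Prop :=
  ∀ a b, A a b ↔ A (φ a) (φ b)

theorem IsAutomorphism.symm {φ : V ≃ V} (hφ : IsAutomorphism A φ) : IsAutomorphism A φ.symm :=
  fun a b => by rw [hφ (φ.symm a), Equiv.apply_symm_apply, Equiv.apply_symm_apply]

theorem IsAutomorphism.reachIn {φ : V ≃ V} (hφ : IsAutomorphism A φ) {k : ℕ} {u v : V}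
    (h : ReachIn A k u v) : ReachIn A k (φ u) (φ v) := by
  obtain ⟨n, hn, f, hf⟩ := reachIn_iff.1 h
  exact reachIn_iff.2 ⟨n, hn, _, hf.map fun a b => (hφ a b).1⟩

namespace IsOutlierFn

variable {k : ℕ} {o : V ≃ V}

theorem apply_comm_s11 (ho : IsOutlierFn A k o) {φ : V ≃ V} (hφ : IsAutomorphism A φ) (x : V) :
    o (φ x) = φ (o x) := by
  refine ((ho (φ x) (φ (o x))).1 fun h => ?_).symm
  exact (ho x (o x)).2 rfl (by simpa using hφ.symm.reachIn h)

theorem symm_apply_comm (ho : IsOutlierFn A k o) {φ : V ≃ V} (hφ : IsAutomorphism A φ)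
    (x : V) :
    o.symm (φ x) = φ (o.symm x) := by
  rw [Equiv.symm_apply_eq, ho.apply_comm_s11 hφ, Equiv.apply_symm_apply]

end IsOutlierFn

structure IsTransitiveOutlierDigraph (A : V → V → Prop) (d k : ℕ) (o : V ≃ V) : Prop where
  geodetic : KGeodetic A k
  outDegree_eq : ∀ u, {w | A u w}.ncard = d
  two_le_outDegree : 2 ≤ d
  outlier : IsOutlierFn A k o
  isAutomorphism_outlier : IsAutomorphism A o
  transitive : ∀ u v, ∃ φ, IsAutomorphism A φ ∧ φ u = v

namespace IsTransitiveOutlierDigraph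

variable {d k : ℕ} {o : V ≃ V}

/-- If `u ⇝ o⁻¹ u` had length `a` and `y = φ u` is an out-neighbour of `u` off that walk,
then `u → y ⇝ φ (o⁻¹ u) = o⁻¹ y` and `u ⇝ o⁻¹ u → o⁻¹ y` would be two walks of length
`a + 1 ≤ k` with different second vertices. -/
theorem not_hasWalk_outlier_symm (hG : IsTransitiveOutlierDigraph A d k o) (u : V) {a : ℕ}
    (ha : 0 < a) (hak : a < k) : ¬ HasWalk A a u (o.symm u) := by
  rintro ⟨f, hf⟩
  obtain ⟨y, hy, hyf⟩ := Set.exists_ne_of_one_lt_ncard (s := {w | A u w})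
    (by rw [hG.outDegree_eq]; exact hG.two_le_outDegree) (f 1)
  obtain ⟨φ, hφ, rfl⟩ := hG.transitive u y
  have h₁ := (IsWalkFn.edge hy).append (hf.map fun a b => (hφ a b).1)
  have h₂ := hf.append (IsWalkFn.edge ((hG.isAutomorphism_outlier.symm u (φ u)).1 hy))
  rw [← hG.outlier.symm_apply_comm hφ] at h₁
  have := (hG.geodetic.eq_of_isWalkFn h₁ h₂ (by omega) (by omega)).2 1 (by omega)
  exact hyf (by simpa [show 1 ≤ a by omega] using this)

theorem exists_hasWalk_return (hG : IsTransitiveOutlierDigraph A d k o) {a : ℕ} {u v : V}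
    (h : HasWalk A a u v) (ha : 0 < a) (hak : a < k) : ∃ m ≤ k, HasWalk A m v u := by
  rw [← reachIn_iff]
  by_contra hn
  rw [(hG.outlier v u).1 hn] at h
  exact hG.not_hasWalk_outlier_symm (o v) ha hak (by simpa using h)

/-- `v` is the successor of `p` on the geodesic from `p` back to `u`. -/
theorem existsUnique_adj_hasWalk_return (hG : IsTransitiveOutlierDigraph A d k o) {s : ℕ}
    {u p : V} (hp : HasWalk A s u p) (hs : 0 < s) (hsk : s < k) :
    ∃! v, A p v ∧ ∃ m < k, HasWalk A m v u := by
  obtain ⟨m, hmk, g, hg⟩ := hG.exists_hasWalk_return hp hs hsk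
  have hm : 0 < m := by
    refine Nat.pos_of_ne_zero fun hm0 => ?_
    obtain ⟨f, hf⟩ := hp
    have hpu : p = u := by rw [← hg.1, ← hg.2.1, hm0]
    exact hG.geodetic.not_isWalkFn_self (hpu ▸ hf) hs hsk.le
  refine ⟨g 1, ⟨by simpa [hg.1] using hg.2.2 0 hm, m - 1, by omega, _, hg.drop (m := 1) hm⟩,
    ?_⟩
  rintro v ⟨hpv, m', hm', h, hh⟩
  have := (hG.geodetic.eq_of_isWalkFn ((IsWalkFn.edge hpv).append hh) hg (by omega) hmk).2 1
    (by omega)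
  simpa using this

end IsTransitiveOutlierDigraph

/-- A closed walk of length `n` with a marked starting vertex; `ZMod n` acts on these by moving
the mark. -/
def IsCyclicWalk (A : V → V → Prop) (f : ZMod n → V) : Prop :=
  ∀ z, A (f z) (f (z + 1))

theorem IsCyclicWalk.isWalkFn {f : ZMod n → V} (hf : IsCyclicWalk A f) (z : ZMod n) (m : ℕ) :
    IsWalkFn A (fun i => f (z + i)) m (f z) (f (z + m)) :=
  ⟨by simp, rfl, fun i _ => by simpa [add_assoc] using hf (z + i)⟩

theorem IsWalkFn.isCyclicWalk [NeZero n] {F : ℕ → V} {u : V} (hF : IsWalkFn A F n u u) :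
    IsCyclicWalk A fun z : ZMod n => F z.val := by
  intro z
  show A (F z.val) (F (z + 1).val)
  have hadj := hF.2.2 z.val z.val_lt
  have hsucc : z + 1 = ((z.val + 1 : ℕ) : ZMod n) := by push_cast; rw [ZMod.natCast_zmod_val]
  rcases (show z.val + 1 < n ∨ z.val + 1 = n by have := z.val_lt; omega) with h | h
  · rwa [hsucc, ZMod.val_cast_of_lt h]
  · rw [hsucc, h, ZMod.natCast_self, ZMod.val_zero, hF.1, ← hF.2.1]
    rwa [h] at hadj

instance : AddAction (ZMod n) {f : ZMod n → V // IsCyclicWalk A f} where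
  vadd c f := ⟨fun z => f.1 (z + c), fun z => by simpa [add_right_comm] using f.2 (z + c)⟩
  zero_vadd f := Subtype.ext <| funext fun z => congrArg f.1 (add_zero z)
  add_vadd c c' f := Subtype.ext <| funext fun z => congrArg f.1 (add_assoc z c c').symm

theorem IsCyclicWalk.vadd_apply (c z : ZMod n) (f : {f : ZMod n → V // IsCyclicWalk A f}) :
    (c +ᵥ f).1 z = f.1 (z + c) :=
  rfl

theorem KGeodetic.stabilizer_cyclicWalk_eq_bot [NeZero n] {k : ℕ} (hgeo : KGeodetic A k)
    (hn : n ≤ 2 * k + 1) (f : {f : ZMod n → V // IsCyclicWalk A f}) :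
    AddAction.stabilizer (ZMod n) f = ⊥ := by
  -- one of `c`, `-c` has value at most `k`, and such a period closes up a walk of that length
  have short : ∀ c ∈ AddAction.stabilizer (ZMod n) f, c.val ≤ k → c = 0 := by
    intro c hc hck
    by_contra hc0
    have hfix : f.1 c = f.1 0 := by
      simpa [IsCyclicWalk.vadd_apply] using congrFun (congrArg Subtype.val hc) 0
    have hwalk := f.2.isWalkFn 0 c.val
    simp only [zero_add, ZMod.natCast_zmod_val, hfix] at hwalk
    exact hgeo.not_isWalkFn_self hwalk (Nat.pos_of_ne_zero ((ZMod.val_ne_zero c).2 hc0)) hck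
  refine (AddSubgroup.eq_bot_iff_forall _).2 fun c hc => ?_
  rcases le_or_gt c.val k with h | h
  · exact short c hc h
  · refine neg_eq_zero.1 (short (-c) (neg_mem hc) ?_)
    have := c.val_lt
    rw [ZMod.neg_val]
    split_ifs <;> omega

theorem KGeodetic.dvd_natCard_cyclicWalk [NeZero n] {k : ℕ} (hgeo : KGeodetic A k)
    (hn : n ≤ 2 * k + 1) : n ∣ Nat.card {f : ZMod n → V // IsCyclicWalk A f} := by
  rw [Nat.card_congr
    (AddAction.selfEquivOrbitsQuotientProd (hgeo.stabilizer_cyclicWalk_eq_bot hn)),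
    Nat.card_prod, Nat.card_zmod]
  exact dvd_mul_left _ _

section Counting

open Finset
open scoped Classical

variable [Fintype V]

noncomputable def outNbhd (A : V → V → Prop) (u : V) : Finset V := univ.filter (A u)

noncomputable def walkEnds (A : V → V → Prop) (n : ℕ) (u : V) : Finset V :=
  univ.filter (HasWalk A n u)

theorem card_outNbhd (u : V) : #(outNbhd A u) = {w | A u w}.ncard := by
  rw [Set.ncard_eq_toFinset_card', Set.toFinset_ofPred, outNbhd]

theorem walkEnds_zero (u : V) : walkEnds A 0 u = {u} := by
  ext v
  simp only [walkEnds, mem_filter, mem_univ, true_and, mem_singleton]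
  constructor
  · rintro ⟨f, hu, hv, -⟩
    rw [← hv, hu]
  · rintro rfl
    exact ⟨fun _ => v, rfl, rfl, by omega⟩

theorem walkEnds_succ (n : ℕ) (u : V) :
    walkEnds A (n + 1) u = (walkEnds A n u).biUnion (outNbhd A) := by
  ext v
  simp only [walkEnds, outNbhd, mem_biUnion, mem_filter, mem_univ, true_and]
  constructor
  · rintro ⟨f, hf⟩
    exact ⟨f n, ⟨f, hf.take n.le_succ⟩, by simpa [hf.2.1] using hf.2.2 n n.lt_succ_self⟩
  · rintro ⟨p, ⟨f, hf⟩, hpv⟩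
    exact ⟨_, hf.append (IsWalkFn.edge hpv)⟩

theorem KGeodetic.pairwiseDisjoint_outNbhd {k n : ℕ} (hgeo : KGeodetic A k) (hn : n < k)
    (u : V) : (walkEnds A n u : Set V).PairwiseDisjoint (outNbhd A) := by
  intro p hp q hq hpq
  refine Finset.disjoint_left.2 fun x hxp hxq => hpq ?_
  obtain ⟨f, hf⟩ := (mem_filter.1 hp).2
  obtain ⟨g, hg⟩ := (mem_filter.1 hq).2
  have := (hgeo.eq_of_isWalkFn (hf.append (IsWalkFn.edge (mem_filter.1 hxp).2))
    (hg.append (IsWalkFn.edge (mem_filter.1 hxq).2)) (by omega) (by omega)).2 n (by omega)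
  simpa [hf.2.1, hg.2.1] using this

theorem KGeodetic.card_walkEnds {d k : ℕ} (hgeo : KGeodetic A k)
    (hdeg : ∀ u, {w | A u w}.ncard = d) {n : ℕ} (hn : n ≤ k) (u : V) :
    #(walkEnds A n u) = d ^ n := by
  induction n with
  | zero => simp [walkEnds_zero]
  | succ n ih =>
    rw [walkEnds_succ, card_biUnion (hgeo.pairwiseDisjoint_outNbhd (by omega) u)]
    simp [card_outNbhd, hdeg, ih (by omega), pow_succ]

theorem KGeodetic.natCard_cyclicWalk_fiber [NeZero n] {k a b : ℕ} (hgeo : KGeodetic A k)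
    (ha : a ≤ k) (hb0 : 0 < b) (hb : b ≤ k) (hab : a + b = n) (u : V) :
    Nat.card {f : {f : ZMod n → V // IsCyclicWalk A f} // f.1 0 = u} =
      #((walkEnds A a u).filter fun v => HasWalk A b v u) := by
  have hwrap : (a : ZMod n) + b = 0 := by rw [← Nat.cast_add, hab, ZMod.natCast_self]
  rw [← Nat.card_eq_finsetCard]
  refine Nat.card_eq_of_bijective (fun f => ⟨f.1.1 a, ?_⟩) ⟨?_, ?_⟩
  · obtain ⟨⟨f, hf⟩, hf0⟩ := f
    dsimp only at hf0
    have hpre := hf.isWalkFn 0 a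
    have hsuf := hf.isWalkFn a b
    simp only [zero_add, hwrap, hf0] at hpre hsuf
    simpa [walkEnds] using ⟨⟨_, hpre⟩, ⟨_, hsuf⟩⟩
  · rintro ⟨⟨f, hf⟩, hf0⟩ ⟨⟨g, hg⟩, hg0⟩ hfg
    simp only [Subtype.mk.injEq] at hf0 hg0 hfg
    have hf₁ := hf.isWalkFn 0 a
    have hg₁ := hg.isWalkFn 0 a
    have hf₂ := hf.isWalkFn a b
    have hg₂ := hg.isWalkFn a b
    simp only [zero_add, hwrap, hf0, hg0, hfg] at hf₁ hg₁ hf₂ hg₂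
    have hpre := (hgeo.eq_of_isWalkFn hf₁ hg₁ ha ha).2
    have hsuf := (hgeo.eq_of_isWalkFn hf₂ hg₂ hb hb).2
    refine Subtype.ext <| Subtype.ext <| funext fun z => ?_
    rw [← ZMod.natCast_zmod_val z]
    rcases le_or_gt z.val a with h | h
    · exact hpre _ h
    · have := hsuf (z.val - a) (by have := z.val_lt; omega)
      rwa [← Nat.cast_add, Nat.add_sub_cancel' h.le] at this
  · rintro ⟨v, hv⟩
    obtain ⟨⟨P, hP⟩, ⟨Q, hQ⟩⟩ : HasWalk A a u v ∧ HasWalk A b v u := by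
      simpa [walkEnds] using hv
    have hPQ := hP.append hQ
    rw [hab] at hPQ
    refine ⟨⟨⟨_, hPQ.isCyclicWalk⟩, by simp [hP.1]⟩, ?_⟩
    simp [ZMod.val_cast_of_lt (by omega : a < n), hP.2.1]

namespace IsTransitiveOutlierDigraph

variable {d k : ℕ} {o : V ≃ V}

theorem card_filter_hasWalk_return_lt (hG : IsTransitiveOutlierDigraph A d k o) {s : ℕ}
    (hs : 0 < s) (hsk : s + 1 < k) (u : V) :
    #((walkEnds A (s + 1) u).filter fun v => ∃ m < k, HasWalk A m v u) = d ^ s := by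
  rw [walkEnds_succ, filter_biUnion, card_biUnion ((hG.geodetic.pairwiseDisjoint_outNbhd
    (by omega) u).mono fun p => filter_subset _ _), ← hG.geodetic.card_walkEnds
    hG.outDegree_eq (n := s) (by omega) u, card_eq_sum_ones]
  refine sum_congr rfl fun p hp => card_eq_one.2 ?_
  obtain ⟨v, hv, huniq⟩ := hG.existsUnique_adj_hasWalk_return (mem_filter.1 hp).2 hs (by omega)
  refine ⟨v, eq_singleton_iff_unique_mem.2 ⟨?_, fun w hw => huniq w ?_⟩⟩
  · simpa [outNbhd] using hv
  · simpa [outNbhd] using hw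

theorem card_filter_hasWalk_return (hG : IsTransitiveOutlierDigraph A d k o) {s : ℕ}
    (hs : 0 < s) (hsk : s + 1 < k) (u : V) :
    #((walkEnds A (s + 1) u).filter fun v => HasWalk A k v u) = d ^ (s + 1) - d ^ s := by
  have hsplit :
      ∀ v ∈ walkEnds A (s + 1) u, HasWalk A k v u ↔ ¬ ∃ m < k, HasWalk A m v u := by
    intro v hv
    obtain ⟨m, hmk, hm⟩ := hG.exists_hasWalk_return (mem_filter.1 hv).2 (by omega) hsk
    constructor
    · rintro ⟨f, hf⟩ ⟨m', hm', g, hg⟩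
      have := (hG.geodetic.eq_of_isWalkFn hf hg le_rfl hm'.le).1
      omega
    · intro hlt
      obtain rfl : m = k := by_contra fun hne => hlt ⟨m, by omega, hm⟩
      exact hm
  rw [filter_congr hsplit, ← hG.card_filter_hasWalk_return_lt hs hsk u,
    ← hG.geodetic.card_walkEnds hG.outDegree_eq hsk.le u,
    ← card_filter_add_card_filter_not (s := walkEnds A (s + 1) u)
      fun v => ∃ m < k, HasWalk A m v u]
  omega

theorem natCard_cyclicWalk [NeZero n]
    (hG : IsTransitiveOutlierDigraph A d k o) {s : ℕ} (hs : 0 < s) (hsk : s + 1 < k)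
    (hn : s + 1 + k = n) :
    Nat.card {f : ZMod n → V // IsCyclicWalk A f} = Fintype.card V * (d ^ (s + 1) - d ^ s) := by
  rw [← Nat.card_congr (Equiv.sigmaFiberEquiv fun f : {f : ZMod n → V // IsCyclicWalk A f} =>
    f.1 0), Nat.card_sigma]
  simp only [hG.geodetic.natCard_cyclicWalk_fiber hsk.le (by omega) le_rfl hn,
    hG.card_filter_hasWalk_return hs hsk, sum_const, card_univ, smul_eq_mul]

end IsTransitiveOutlierDigraph

end Counting

end

theorem stmt_11_general {V : Type*} [Fintype V] (A : V → V → Prop) (d k : ℕ)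
    (hd : 2 ≤ d)
    (hgeo : KGeodetic A k)
    (hdeg : ∀ u : V, Set.ncard {w : V | A u w} = d)
    (hcard : Fintype.card V = mooreBound d k + 1)
    (o : V ≃ V) (ho : IsOutlierFn A k o)
    (hhom : ∀ a b : V, A a b ↔ A (o a) (o b))
    (hvt : ∀ u v : V, ∃ φ : V ≃ V, (∀ a b : V, A a b ↔ A (φ a) (φ b)) ∧ φ u = v) :
    ∀ t : ℕ, 2 ≤ t → t ≤ k - 1 →
      (k + t) ∣ (mooreBound d k + 1) * (d ^ t - d ^ (t - 1)) := by
  intro t ht htk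
  obtain ⟨s, rfl⟩ : ∃ s, t = s + 1 := ⟨t - 1, by omega⟩
  have hG : IsTransitiveOutlierDigraph A d k o := ⟨hgeo, hdeg, hd, ho, hhom, hvt⟩
  have : NeZero (k + (s + 1)) := ⟨by omega⟩
  have hdvd := hgeo.dvd_natCard_cyclicWalk (A := A) (n := k + (s + 1)) (by omega)
  rwa [hG.natCard_cyclicWalk (s := s) (by omega) (by omega) (by omega), hcard] at hdvd

/-- If `G` is a vertex-transitive `(d,k;+1)`-digraph, then for `2 ≤ t ≤ k-1`,
`(k+t)` divides `(M(d,k)+1)·(d^t − d^(t-1))`. -/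
theorem stmt_11 {V : Type*} [Fintype V] (A : V → V → Prop) (d k : ℕ)
    (hd : 2 ≤ d) (hk : 2 ≤ k)
    (hgeo : KGeodetic A k)
    (hdeg : ∀ u : V, Set.ncard {w : V | A u w} = d)
    (hcard : Fintype.card V = mooreBound d k + 1)
    (o : V ≃ V) (ho : IsOutlierFn A k o)
    (hhom : ∀ a b : V, A a b ↔ A (o a) (o b))
    (hvt : ∀ u v : V, ∃ φ : V ≃ V, (∀ a b : V, A a b ↔ A (φ a) (φ b)) ∧ φ u = v) :
    ∀ t : ℕ, 2 ≤ t → t ≤ k - 1 →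
      (k + t) ∣ (mooreBound d k + 1) * (d ^ t - d ^ (t - 1)) :=
  stmt_11_general A d k hd hgeo hdeg hcard o ho hhom hvt
end
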